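/- Let h be a Γ-equivariant continuous hermitian metric, let F ⊆ G be a measurable fundamental domain for the left translation action of Γ on G, and let ψ : G → ℝ be a continuous function such that ∫_F h(x)(φ(xg), φ(xg)) dμ(x) ≤ ψ(g) · ∫_F h(x)(φ(x), φ(x)) dμ(x) for all g ∈ G and all continuous Γ-equivariant φ : G → V. Then for every continuous compactly supported f : G → ℂ and every continuous Γ-equivariant φ : G → V with finite L²-norm, the function R(f)φ : x ↦ ∫_G f(y) φ(xy) dμ(y) is Γ-equivariant and satisfies ( ∫_F h(x)((R(f)φ)(x), (R(f)φ)(x)) dμ(x) )^{1/2} ≤ ( ∫_G |f(g)| ψ(g)^{1/2} dμ(g) ) · ( ∫_F h(x)(φ(x), φ(x)) dμ(x) )^{1/2}. In particular R(f) extends to a bounded operator on the Hilbert space L²(Γ\G, χ). -/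

import Mathlib

/-
Write `‖v‖ₓ = √(h x v v).re` and `R(f)φ(x) = ∫ f(y) φ(xy) dy`. Pairing `R(f)φ(x)` with itself
under `h x` and applying Cauchy–Schwarz gives `‖R(f)φ(x)‖ₓ ≤ ∫ |f(y)| ‖φ(xy)‖ₓ dy`; integrating
the square over `F`, swapping the integrals and applying Cauchy–Schwarz in `L²(F)` once more yields
Minkowski's integral inequality `‖R(f)φ‖ ≤ ∫ |f(y)| ‖φ(·y)‖ dy`, and the domination hypothesis
bounds `‖φ(·y)‖` by `√ψ(y) ‖φ‖`.

The one delicate point is that the right translates `φ(·y)` are square integrable on `F`, so that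
the domination hypothesis (a statement about Bochner integrals) is not vacuous. Cocompactness of
`Γ` and equivariance of `h` make `h x` and `h (x y)` uniformly comparable, and right translation by
`y` carries `F` to another fundamental domain, on which `‖φ‖ₓ²` has the same integral.
-/

open MeasureTheory

/-- A `Γ`-equivariant continuous hermitian metric on the trivial `V`-bundle over `G`:
a continuous assignment `g ↦ h g` of a hermitian inner product on `V`
(conjugate-linear in the first variable, linear in the second) satisfying
`h (γ * g) (χ γ v) (χ γ w) = h g v w`. -/
def IsEquivariantHermitianMetric {G V : Type*} [Group G] [TopologicalSpace G]
    [NormedAddCommGroup V] [NormedSpace ℂ V]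
    (Γ : Subgroup G) (χ : Γ →* (V →ₗ[ℂ] V)ˣ) (h : G → V → V → ℂ) : Prop :=
  Continuous (fun p : G × V × V => h p.1 p.2.1 p.2.2) ∧
  (∀ (g : G) (v w w' : V), h g v (w + w') = h g v w + h g v w') ∧
  (∀ (g : G) (a : ℂ) (v w : V), h g v (a • w) = a * h g v w) ∧
  (∀ (g : G) (v w : V), h g w v = (starRingEnd ℂ) (h g v w)) ∧
  (∀ (g : G) (v : V), v ≠ 0 → 0 < (h g v v).re) ∧
  (∀ (γ : Γ) (g : G) (v w : V),
    h ((γ : G) * g) ((χ γ : V →ₗ[ℂ] V) v) ((χ γ : V →ₗ[ℂ] V) w) = h g v w)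

open ComplexConjugate
open scoped ENNReal Pointwise

theorem ENNReal.ofReal_sqrt_sq (t : ℝ) : ENNReal.ofReal √t ^ 2 = ENNReal.ofReal t := by
  rcases le_total 0 t with ht | ht
  · rw [← ENNReal.ofReal_pow (Real.sqrt_nonneg t), Real.sq_sqrt ht]
  · simp [Real.sqrt_eq_zero_of_nonpos ht, ENNReal.ofReal_of_nonpos ht]

/-- Minkowski's integral inequality in `L²(ν)`, proved by duality against `b`; finiteness of
`∫⁻ b²` is what allows cancelling one factor of its square root. -/
theorem lintegral_sq_le_sq_lintegral_of_le_lintegral {X Y : Type*} [MeasurableSpace X]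
    [MeasurableSpace Y] {ν : Measure X} {μ : Measure Y} [SFinite ν] [SFinite μ]
    {b : X → ℝ≥0∞} {k : X → Y → ℝ≥0∞} {c : Y → ℝ≥0∞} (hb : Measurable b)
    (hk : Measurable (Function.uncurry k)) (hfin : ∫⁻ x, b x ^ 2 ∂ν ≠ ∞)
    (hbk : ∀ x, b x ≤ ∫⁻ y, k x y ∂μ) (hkc : ∀ y, ∫⁻ x, k x y ^ 2 ∂ν ≤ c y ^ 2) :
    ∫⁻ x, b x ^ 2 ∂ν ≤ (∫⁻ y, c y ∂μ) ^ 2 := by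
  set s := (∫⁻ x, b x ^ 2 ∂ν) ^ (1 / 2 : ℝ)
  have sqrt_sq : ∀ t : ℝ≥0∞, (t ^ (1 / 2 : ℝ)) ^ 2 = t := fun t => by
    rw [← ENNReal.rpow_two, ← ENNReal.rpow_mul]; norm_num
  have sq_sqrt : ∀ t : ℝ≥0∞, (t ^ 2) ^ (1 / 2 : ℝ) = t := fun t => by
    rw [← ENNReal.rpow_two, ← ENNReal.rpow_mul]; norm_num
  have cauchy_schwarz : ∀ y, ∫⁻ x, b x * k x y ∂ν ≤ s * c y := fun y => by
    calc ∫⁻ x, b x * k x y ∂ν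
        ≤ (∫⁻ x, b x ^ (2 : ℝ) ∂ν) ^ (1 / 2 : ℝ) * (∫⁻ x, k x y ^ (2 : ℝ) ∂ν) ^ (1 / 2 : ℝ) :=
          ENNReal.lintegral_mul_le_Lp_mul_Lq ν .two_two hb.aemeasurable
            hk.of_uncurry_right.aemeasurable
      _ ≤ s * (c y ^ 2) ^ (1 / 2 : ℝ) := by
          simp only [ENNReal.rpow_two]
          gcongr
          exact hkc y
      _ = s * c y := by rw [sq_sqrt]
  have s_sq_le : s ^ 2 ≤ s * ∫⁻ y, c y ∂μ := calc
    s ^ 2 = ∫⁻ x, b x * b x ∂ν := by simp only [sqrt_sq, sq, s]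
    _ ≤ ∫⁻ x, b x * ∫⁻ y, k x y ∂μ ∂ν := by gcongr with x; exact hbk x
    _ = ∫⁻ x, ∫⁻ y, b x * k x y ∂μ ∂ν :=
        lintegral_congr fun x => (lintegral_const_mul _ hk.of_uncurry_left).symm
    _ = ∫⁻ y, ∫⁻ x, b x * k x y ∂ν ∂μ :=
        lintegral_lintegral_swap ((hb.comp measurable_fst).mul hk).aemeasurable
    _ ≤ ∫⁻ y, s * c y ∂μ := lintegral_mono cauchy_schwarz
    _ = s * ∫⁻ y, c y ∂μ := lintegral_const_mul' _ _ (by simp [s, hfin])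
  have s_le : s ≤ ∫⁻ y, c y ∂μ := by
    rcases eq_or_ne s 0 with hs | hs
    · simp [hs]
    · rw [sq] at s_sq_le
      exact (ENNReal.mul_le_mul_iff_right hs (by simp [s, hfin])).mp s_sq_le
  calc ∫⁻ x, b x ^ 2 ∂ν = s ^ 2 := (sqrt_sq _).symm
    _ ≤ (∫⁻ y, c y ∂μ) ^ 2 := by gcongr

theorem MeasureTheory.IsFundamentalDomain.integrableOn_comp_mul_right {G E : Type*} [Group G]
    [MeasurableSpace G] [MeasurableMul G] [NormedAddCommGroup E] {μ : Measure G}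
    [μ.IsMulLeftInvariant] [μ.IsMulRightInvariant] {Γ : Subgroup G} [Countable Γ] {F : Set G}
    (hF : IsFundamentalDomain Γ F μ) {f : G → E} (hf : ∀ (γ : Γ) (x : G), f (γ * x) = f x)
    (hfi : IntegrableOn f F μ) (g : G) : IntegrableOn (fun x => f (x * g)) F μ := by
  have hFg : IntegrableOn f (MulOpposite.op g • F) μ :=
    ((hF.smul_of_comm _).integrableOn_iff hF hf).mpr hfi
  rw [← Set.image_smul] at hFg
  exact ((measurePreserving_mul_right μ g).integrableOn_image
    (MeasurableEquiv.mulRight g).measurableEmbedding).mp hFg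

namespace IsEquivariantHermitianMetric

variable {G V : Type*} [Group G] [TopologicalSpace G] [NormedAddCommGroup V] [NormedSpace ℂ V]
  {Γ : Subgroup G} {χ : Γ →* (V →ₗ[ℂ] V)ˣ} {h : G → V → V → ℂ}

theorem continuous_uncurry (hh : IsEquivariantHermitianMetric Γ χ h) :
    Continuous fun p : G × V × V => h p.1 p.2.1 p.2.2 :=
  hh.1

theorem apply_add_right (hh : IsEquivariantHermitianMetric Γ χ h) (g : G) (v w w' : V) :
    h g v (w + w') = h g v w + h g v w' :=
  hh.2.1 g v w w'

theorem apply_smul_right (hh : IsEquivariantHermitianMetric Γ χ h) (g : G) (a : ℂ) (v w : V) :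
    h g v (a • w) = a * h g v w :=
  hh.2.2.1 g a v w

theorem apply_symm (hh : IsEquivariantHermitianMetric Γ χ h) (g : G) (v w : V) :
    h g w v = conj (h g v w) :=
  hh.2.2.2.1 g v w

theorem re_apply_self_pos (hh : IsEquivariantHermitianMetric Γ χ h) (g : G) {v : V}
    (hv : v ≠ 0) : 0 < (h g v v).re :=
  hh.2.2.2.2.1 g v hv

theorem apply_coe_mul_map (hh : IsEquivariantHermitianMetric Γ χ h) (γ : Γ) (g : G) (v w : V) :
    h (γ * g) ((χ γ : V →ₗ[ℂ] V) v) ((χ γ : V →ₗ[ℂ] V) w) = h g v w :=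
  hh.2.2.2.2.2 γ g v w

theorem apply_smul_left (hh : IsEquivariantHermitianMetric Γ χ h) (g : G) (a : ℂ) (v w : V) :
    h g (a • v) w = conj a * h g v w := by
  rw [hh.apply_symm, hh.apply_smul_right, map_mul, ← hh.apply_symm]

theorem apply_add_left (hh : IsEquivariantHermitianMetric Γ χ h) (g : G) (u v w : V) :
    h g (u + v) w = h g u w + h g v w := by
  rw [hh.apply_symm, hh.apply_add_right, map_add, ← hh.apply_symm, ← hh.apply_symm]

theorem apply_zero_right (hh : IsEquivariantHermitianMetric Γ χ h) (g : G) (v : V) :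
    h g v 0 = 0 := by
  simpa using hh.apply_smul_right g 0 v 0

theorem re_apply_self_nonneg (hh : IsEquivariantHermitianMetric Γ χ h) (g : G) (v : V) :
    0 ≤ (h g v v).re := by
  rcases eq_or_ne v 0 with rfl | hv
  · simp [hh.apply_zero_right]
  · exact (hh.re_apply_self_pos g hv).le

theorem norm_apply_le (hh : IsEquivariantHermitianMetric Γ χ h) (g : G) (v w : V) :
    ‖h g v w‖ ≤ √(h g v v).re * √(h g w w).re :=
  letI : PreInnerProductSpace.Core ℂ V :=
    { inner := h g
      conj_inner_symm v w := by simp [hh.apply_symm g v w]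
      re_inner_nonneg := hh.re_apply_self_nonneg g
      add_left := hh.apply_add_left g
      smul_left v w a := hh.apply_smul_left g a v w }
  InnerProductSpace.Core.norm_inner_le_norm (𝕜 := ℂ) v w

theorem re_apply_smul_self (hh : IsEquivariantHermitianMetric Γ χ h) (g : G) (a : ℂ) (v : V) :
    (h g (a • v) (a • v)).re = ‖a‖ ^ 2 * (h g v v).re := by
  rw [hh.apply_smul_left, hh.apply_smul_right, ← mul_assoc, Complex.conj_mul', ← Complex.ofReal_pow,
    Complex.re_ofReal_mul]

theorem apply_integral_right [FiniteDimensional ℂ V] (hh : IsEquivariantHermitianMetric Γ χ h)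
    (g : G) (v : V) {X : Type*} [MeasurableSpace X] {μ : Measure X} {u : X → V}
    (hu : Integrable u μ) : h g v (∫ y, u y ∂μ) = ∫ y, h g v (u y) ∂μ :=
  let L : V →ₗ[ℂ] ℂ := ⟨⟨h g v, hh.apply_add_right g v⟩, fun a w => hh.apply_smul_right g a v w⟩
  (L.toContinuousLinearMap.integral_comp_comm hu).symm

theorem ofReal_sqrt_re_apply_integral_le [FiniteDimensional ℂ V]
    (hh : IsEquivariantHermitianMetric Γ χ h) (g : G) {X : Type*} [MeasurableSpace X]
    {μ : Measure X} (u : X → V) :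
    ENNReal.ofReal √(h g (∫ y, u y ∂μ) (∫ y, u y ∂μ)).re ≤
      ∫⁻ y, ENNReal.ofReal √(h g (u y) (u y)).re ∂μ := by
  by_cases hu : Integrable u μ
  swap
  · simp [integral_undef hu, hh.apply_zero_right]
  set v := ∫ y, u y ∂μ
  set n := √(h g v v).re
  have n_sq_le : ENNReal.ofReal n * ENNReal.ofReal n ≤
      ENNReal.ofReal n * ∫⁻ y, ENNReal.ofReal √(h g (u y) (u y)).re ∂μ := calc
    ENNReal.ofReal n * ENNReal.ofReal n = ENNReal.ofReal (h g v v).re := by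
      rw [← ENNReal.ofReal_mul (Real.sqrt_nonneg _),
        Real.mul_self_sqrt (hh.re_apply_self_nonneg g v)]
    _ ≤ ‖∫ y, h g v (u y) ∂μ‖ₑ := by
      rw [← hh.apply_integral_right g v hu, ← ofReal_norm]
      exact ENNReal.ofReal_le_ofReal (Complex.re_le_norm _)
    _ ≤ ∫⁻ y, ‖h g v (u y)‖ₑ ∂μ := enorm_integral_le_lintegral_enorm _
    _ ≤ ∫⁻ y, ENNReal.ofReal (n * √(h g (u y) (u y)).re) ∂μ := by
      gcongr with y
      rw [← ofReal_norm]
      exact ENNReal.ofReal_le_ofReal (hh.norm_apply_le g v (u y))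
    _ = ENNReal.ofReal n * ∫⁻ y, ENNReal.ofReal √(h g (u y) (u y)).re ∂μ := by
      rw [← lintegral_const_mul' _ _ ENNReal.ofReal_ne_top]
      exact lintegral_congr fun y => ENNReal.ofReal_mul (Real.sqrt_nonneg _)
  rcases eq_or_ne (ENNReal.ofReal n) 0 with hn | hn
  · simp [hn]
  · exact (ENNReal.mul_le_mul_iff_right hn ENNReal.ofReal_ne_top).mp n_sq_le

theorem continuous_apply (hh : IsEquivariantHermitianMetric Γ χ h) {X : Type*}
    [TopologicalSpace X] {p : X → G} {u w : X → V} (hp : Continuous p) (hu : Continuous u)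
    (hw : Continuous w) : Continuous fun x => h (p x) (u x) (w x) :=
  hh.continuous_uncurry.comp (hp.prodMk (hu.prodMk hw))

theorem exists_pos_mul_norm_sq_le_re_apply_self [FiniteDimensional ℂ V]
    (hh : IsEquivariantHermitianMetric Γ χ h) {K : Set G} (hK : IsCompact K) :
    ∃ m > 0, ∃ M ≥ 0, ∀ x ∈ K, ∀ v : V,
      m * ‖v‖ ^ 2 ≤ (h x v v).re ∧ (h x v v).re ≤ M * ‖v‖ ^ 2 := by
  have hS : IsCompact (K ×ˢ Metric.sphere (0 : V) 1) := hK.prod (isCompact_sphere 0 1)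
  have hq : Continuous fun p : G × V => (h p.1 p.2 p.2).re :=
    Complex.continuous_re.comp (hh.continuous_apply continuous_fst continuous_snd continuous_snd)
  obtain ⟨m, hm, hmq⟩ := hS.exists_forall_le' hq.continuousOn (a := 0) fun p hp =>
    hh.re_apply_self_pos _ (ne_zero_of_mem_unit_sphere ⟨p.2, hp.2⟩)
  obtain ⟨M, hMq⟩ := hS.exists_bound_of_continuousOn hq.continuousOn
  refine ⟨m, hm, max M 0, le_max_right _ _, fun x hx v => ?_⟩
  rcases eq_or_ne v 0 with rfl | hv
  · simp [hh.apply_zero_right]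
  set w := (‖v‖ : ℂ)⁻¹ • v
  have hw : w ∈ Metric.sphere (0 : V) 1 := by
    simp [w, norm_smul, hv]
  have hvw : (h x v v).re = ‖v‖ ^ 2 * (h x w w).re := by
    have hv' : v = (‖v‖ : ℂ) • w := by simp [w, smul_smul, hv]
    conv_lhs => rw [hv', hh.re_apply_smul_self]
    simp
  rw [hvw]
  constructor
  · rw [mul_comm]
    gcongr
    exact hmq (x, w) ⟨hx, hw⟩
  · rw [mul_comm (max M 0)]
    gcongr
    exact ((Real.le_norm_self _).trans (hMq (x, w) ⟨hx, hw⟩)).trans (le_max_left _ _)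

theorem exists_re_apply_self_le_mul_re_apply_mul_right [ContinuousMul G] [FiniteDimensional ℂ V]
    (hh : IsEquivariantHermitianMetric Γ χ h)
    (hcocompact : ∃ C : Set G, IsCompact C ∧ ∀ g : G, ∃ γ ∈ Γ, γ * g ∈ C) (g : G) :
    ∃ c ≥ 0, ∀ (x : G) (v : V), (h x v v).re ≤ c * (h (x * g) v v).re := by
  obtain ⟨C, hC, hCΓ⟩ := hcocompact
  obtain ⟨_, _, M, hM, hCM⟩ := hh.exists_pos_mul_norm_sq_le_re_apply_self hC
  obtain ⟨m, hm, _, _, hCgm⟩ :=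
    hh.exists_pos_mul_norm_sq_le_re_apply_self (hC.image (continuous_mul_const g))
  refine ⟨M / m, by positivity, fun x v => ?_⟩
  obtain ⟨γ, hγ, hγx⟩ := hCΓ x
  set w := (χ ⟨γ, hγ⟩ : V →ₗ[ℂ] V) v
  have hw_equiv (y : G) : h (γ * y) w w = h y v v := hh.apply_coe_mul_map ⟨γ, hγ⟩ y v v
  calc (h x v v).re = (h (γ * x) w w).re := by rw [hw_equiv]
    _ ≤ M * ‖w‖ ^ 2 := (hCM _ hγx w).2
    _ = M / m * (m * ‖w‖ ^ 2) := by field_simp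
    _ ≤ M / m * (h (γ * x * g) w w).re := by gcongr; exact (hCgm _ ⟨_, hγx, rfl⟩ w).1
    _ = M / m * (h (x * g) v v).re := by rw [mul_assoc, hw_equiv]

end IsEquivariantHermitianMetric

theorem integral_smul_mul_left_of_equivariant {G V : Type*} [Group G] [MeasurableSpace G]
    [NormedAddCommGroup V] [NormedSpace ℂ V] [FiniteDimensional ℂ V] (μ : Measure G)
    {Γ : Subgroup G} {χ : Γ →* (V →ₗ[ℂ] V)ˣ} {φ : G → V}
    (hφ : ∀ (γ : Γ) (x : G), φ (γ * x) = (χ γ : V →ₗ[ℂ] V) (φ x)) (f : G → ℂ)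
    (γ : Γ) (x : G) :
    ∫ y, f y • φ (γ * x * y) ∂μ = (χ γ : V →ₗ[ℂ] V) (∫ y, f y • φ (x * y) ∂μ) := by
  simp_rw [mul_assoc, hφ, ← map_smul]
  exact (LinearMap.GeneralLinearGroup.toLinearEquiv (χ γ)).toContinuousLinearEquiv
    |>.integral_comp_comm _

section FundamentalDomain

variable {G V : Type*} [Group G] [TopologicalSpace G] [IsTopologicalGroup G] [MeasurableSpace G]
  [BorelSpace G] [NormedAddCommGroup V] [NormedSpace ℂ V] [FiniteDimensional ℂ V]
  {μ : Measure G} [μ.IsMulLeftInvariant] [μ.IsMulRightInvariant] {Γ : Subgroup G} [Countable Γ]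
  {χ : Γ →* (V →ₗ[ℂ] V)ˣ} {h : G → V → V → ℂ} {F : Set G} {φ : G → V}

theorem integrableOn_re_apply_comp_mul_right (hh : IsEquivariantHermitianMetric Γ χ h)
    (hcocompact : ∃ C : Set G, IsCompact C ∧ ∀ g : G, ∃ γ ∈ Γ, γ * g ∈ C)
    (hF : IsFundamentalDomain Γ F μ) (hφ : Continuous φ)
    (hφeq : ∀ (γ : Γ) (x : G), φ (γ * x) = (χ γ : V →ₗ[ℂ] V) (φ x))
    (hφL2 : IntegrableOn (fun x => (h x (φ x) (φ x)).re) F μ) (g : G) :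
    IntegrableOn (fun x => (h x (φ (x * g)) (φ (x * g))).re) F μ := by
  obtain ⟨c, -, hc⟩ := hh.exists_re_apply_self_le_mul_re_apply_mul_right hcocompact g
  have hinv (γ : Γ) (x : G) : (h (γ * x) (φ (γ * x)) (φ (γ * x))).re = (h x (φ x) (φ x)).re := by
    rw [hφeq, hh.apply_coe_mul_map]
  have hφg : Continuous fun x => φ (x * g) := hφ.comp (continuous_mul_const g)
  refine ((hF.integrableOn_comp_mul_right hinv hφL2 g).const_mul c).mono'
    (Complex.continuous_re.comp (hh.continuous_apply continuous_id hφg hφg)).aestronglyMeasurable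
    (ae_of_all _ fun x => ?_)
  rw [Real.norm_of_nonneg (hh.re_apply_self_nonneg _ _)]
  exact hc x (φ (x * g))

theorem lintegral_ofReal_sqrt_re_apply_smul_comp_mul_right_sq_le
    (hh : IsEquivariantHermitianMetric Γ χ h)
    (hcocompact : ∃ C : Set G, IsCompact C ∧ ∀ g : G, ∃ γ ∈ Γ, γ * g ∈ C)
    (hF : IsFundamentalDomain Γ F μ) {ψ : G → ℝ}
    (hψdom : ∀ (g : G) (φ : G → V), Continuous φ →
      (∀ (γ : Γ) (x : G), φ ((γ : G) * x) = (χ γ : V →ₗ[ℂ] V) (φ x)) →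
      (∫ x in F, (h x (φ (x * g)) (φ (x * g))).re ∂μ) ≤
        ψ g * ∫ x in F, (h x (φ x) (φ x)).re ∂μ)
    (hφ : Continuous φ) (hφeq : ∀ (γ : Γ) (x : G), φ (γ * x) = (χ γ : V →ₗ[ℂ] V) (φ x))
    (hφL2 : IntegrableOn (fun x => (h x (φ x) (φ x)).re) F μ) (a : ℂ) (g : G) :
    ∫⁻ x in F, ENNReal.ofReal √(h x (a • φ (x * g)) (a • φ (x * g))).re ^ 2 ∂μ ≤
      ENNReal.ofReal (‖a‖ * √(ψ g) * √(∫ x in F, (h x (φ x) (φ x)).re ∂μ)) ^ 2 := by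
  set A := ∫ x in F, (h x (φ x) (φ x)).re ∂μ
  have hA : 0 ≤ A := integral_nonneg fun x => hh.re_apply_self_nonneg x (φ x)
  have hψA := hψdom g φ hφ hφeq
  have hψ : ψ g * A ≤ √(ψ g) ^ 2 * A := by
    rcases le_total 0 (ψ g) with hψ | hψ
    · rw [Real.sq_sqrt hψ]
    · nlinarith [sq_nonneg √(ψ g)]
  calc ∫⁻ x in F, ENNReal.ofReal √(h x (a • φ (x * g)) (a • φ (x * g))).re ^ 2 ∂μ
      = ∫⁻ x in F,
          ENNReal.ofReal (‖a‖ ^ 2) * ENNReal.ofReal (h x (φ (x * g)) (φ (x * g))).re ∂μ := by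
        refine lintegral_congr fun x => ?_
        rw [ENNReal.ofReal_sqrt_sq, hh.re_apply_smul_self, ENNReal.ofReal_mul (by positivity)]
    _ = ENNReal.ofReal (‖a‖ ^ 2) *
          ENNReal.ofReal (∫ x in F, (h x (φ (x * g)) (φ (x * g))).re ∂μ) := by
        rw [lintegral_const_mul' _ _ ENNReal.ofReal_ne_top, ofReal_integral_eq_lintegral_ofReal
          (integrableOn_re_apply_comp_mul_right hh hcocompact hF hφ hφeq hφL2 g)
          (ae_of_all _ fun x => hh.re_apply_self_nonneg x _)]
    _ ≤ ENNReal.ofReal (‖a‖ ^ 2) * ENNReal.ofReal (√(ψ g) ^ 2 * A) := by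
        gcongr
        exact hψA.trans hψ
    _ = ENNReal.ofReal (‖a‖ * √(ψ g) * √A) ^ 2 := by
        rw [← ENNReal.ofReal_mul (by positivity), ← ENNReal.ofReal_pow (by positivity), mul_pow,
          mul_pow, Real.sq_sqrt hA, mul_assoc]

theorem lintegral_ofReal_sqrt_re_apply_integral_sq_le [SecondCountableTopology G] [SFinite μ]
    (hh : IsEquivariantHermitianMetric Γ χ h)
    (hcocompact : ∃ C : Set G, IsCompact C ∧ ∀ g : G, ∃ γ ∈ Γ, γ * g ∈ C)
    (hF : IsFundamentalDomain Γ F μ) {ψ : G → ℝ}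
    (hψdom : ∀ (g : G) (φ : G → V), Continuous φ →
      (∀ (γ : Γ) (x : G), φ ((γ : G) * x) = (χ γ : V →ₗ[ℂ] V) (φ x)) →
      (∫ x in F, (h x (φ (x * g)) (φ (x * g))).re ∂μ) ≤
        ψ g * ∫ x in F, (h x (φ x) (φ x)).re ∂μ)
    {f : G → ℂ} (hf : Continuous f) (hφ : Continuous φ)
    (hφeq : ∀ (γ : Γ) (x : G), φ (γ * x) = (χ γ : V →ₗ[ℂ] V) (φ x))
    (hφL2 : IntegrableOn (fun x => (h x (φ x) (φ x)).re) F μ)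
    (hfin : ∫⁻ x in F, ENNReal.ofReal
      √(h x (∫ y, f y • φ (x * y) ∂μ) (∫ y, f y • φ (x * y) ∂μ)).re ^ 2 ∂μ ≠ ∞) :
    ∫⁻ x in F, ENNReal.ofReal
        √(h x (∫ y, f y • φ (x * y) ∂μ) (∫ y, f y • φ (x * y) ∂μ)).re ^ 2 ∂μ ≤
      (∫⁻ y, ENNReal.ofReal
        (‖f y‖ * √(ψ y) * √(∫ x in F, (h x (φ x) (φ x)).re ∂μ)) ∂μ) ^ 2 := by
  have hconv : Continuous fun p : G × G => f p.2 • φ (p.1 * p.2) :=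
    (hf.comp continuous_snd).smul (hφ.comp continuous_mul)
  have hI : StronglyMeasurable fun x => ∫ y, f y • φ (x * y) ∂μ :=
    hconv.stronglyMeasurable.integral_prod_right'
  have hb : Measurable fun x =>
      ENNReal.ofReal √(h x (∫ y, f y • φ (x * y) ∂μ) (∫ y, f y • φ (x * y) ∂μ)).re :=
    (Complex.measurable_re.comp (hh.continuous_uncurry.comp_stronglyMeasurable
      (stronglyMeasurable_id.prodMk (hI.prodMk hI))).measurable).sqrt.ennreal_ofReal
  have hk : Measurable (Function.uncurry fun x y =>
      ENNReal.ofReal √(h x (f y • φ (x * y)) (f y • φ (x * y))).re) :=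
    (ENNReal.continuous_ofReal.comp (Real.continuous_sqrt.comp (Complex.continuous_re.comp
      (hh.continuous_apply continuous_fst hconv hconv)))).measurable
  refine lintegral_sq_le_sq_lintegral_of_le_lintegral hb hk hfin
    (fun x => hh.ofReal_sqrt_re_apply_integral_le x _) fun y => ?_
  exact lintegral_ofReal_sqrt_re_apply_smul_comp_mul_right_sq_le hh hcocompact hF hψdom hφ hφeq
    hφL2 (f y) y

end FundamentalDomain

theorem convolution_operator_L2_bound_general
    {G V : Type*} [Group G] [TopologicalSpace G] [IsTopologicalGroup G]
    [LocallyCompactSpace G] [SecondCountableTopology G]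
    [MeasurableSpace G] [BorelSpace G] (μ : Measure G)
    [μ.IsHaarMeasure] [μ.IsMulRightInvariant]
    [NormedAddCommGroup V] [NormedSpace ℂ V] [FiniteDimensional ℂ V]
    (Γ : Subgroup G) [DiscreteTopology Γ]
    (hcocompact : ∃ C : Set G, IsCompact C ∧ ∀ g : G, ∃ γ ∈ Γ, γ * g ∈ C)
    (χ : Γ →* (V →ₗ[ℂ] V)ˣ)
    (h : G → V → V → ℂ) (hh : IsEquivariantHermitianMetric Γ χ h)
    (F : Set G) (hF : IsFundamentalDomain Γ F μ)
    (ψ : G → ℝ) (hψ : Continuous ψ)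
    (hψdom : ∀ (g : G) (φ : G → V), Continuous φ →
      (∀ (γ : Γ) (x : G), φ ((γ : G) * x) = (χ γ : V →ₗ[ℂ] V) (φ x)) →
      (∫ x in F, (h x (φ (x * g)) (φ (x * g))).re ∂μ) ≤
        ψ g * ∫ x in F, (h x (φ x) (φ x)).re ∂μ)
    (f : G → ℂ) (hf : Continuous f) (hfsupp : HasCompactSupport f)
    (φ : G → V) (hφ : Continuous φ)
    (hφeq : ∀ (γ : Γ) (x : G), φ ((γ : G) * x) = (χ γ : V →ₗ[ℂ] V) (φ x))
    (hφL2 : IntegrableOn (fun x => (h x (φ x) (φ x)).re) F μ) :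
    (∀ (γ : Γ) (x : G),
        (∫ y, f y • φ (((γ : G) * x) * y) ∂μ) =
          (χ γ : V →ₗ[ℂ] V) (∫ y, f y • φ (x * y) ∂μ)) ∧
    Real.sqrt (∫ x in F,
        (h x (∫ y, f y • φ (x * y) ∂μ) (∫ y, f y • φ (x * y) ∂μ)).re ∂μ) ≤
      (∫ g, ‖f g‖ * Real.sqrt (ψ g) ∂μ) *
        Real.sqrt (∫ x in F, (h x (φ x) (φ x)).re ∂μ) := by
  have : Countable Γ := TopologicalSpace.separableSpace_iff_countable.mp inferInstance
  refine ⟨integral_smul_mul_left_of_equivariant μ hφeq f, ?_⟩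
  set A := ∫ x in F, (h x (φ x) (φ x)).re ∂μ
  have hR : 0 ≤ ∫ g, ‖f g‖ * √(ψ g) ∂μ := integral_nonneg fun g => by positivity
  by_cases hL2 : IntegrableOn
    (fun x => (h x (∫ y, f y • φ (x * y) ∂μ) (∫ y, f y • φ (x * y) ∂μ)).re) F μ
  swap
  · rw [integral_undef hL2, Real.sqrt_zero]
    positivity
  have hLHS : ∫⁻ x in F, ENNReal.ofReal
      √(h x (∫ y, f y • φ (x * y) ∂μ) (∫ y, f y • φ (x * y) ∂μ)).re ^ 2 ∂μ =
      ENNReal.ofReal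
        (∫ x in F, (h x (∫ y, f y • φ (x * y) ∂μ) (∫ y, f y • φ (x * y) ∂μ)).re ∂μ) := by
    simp_rw [ENNReal.ofReal_sqrt_sq]
    exact (ofReal_integral_eq_lintegral_ofReal hL2
      (ae_of_all _ fun x => hh.re_apply_self_nonneg x _)).symm
  have hRHS : ∫⁻ y, ENNReal.ofReal (‖f y‖ * √(ψ y) * √A) ∂μ =
      ENNReal.ofReal ((∫ g, ‖f g‖ * √(ψ g) ∂μ) * √A) := by
    rw [← integral_mul_const, ofReal_integral_eq_lintegral_ofReal _
      (ae_of_all _ fun y => by positivity)]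
    exact ((continuous_norm.comp hf).mul (Real.continuous_sqrt.comp hψ) |>.mul
      continuous_const).integrable_of_hasCompactSupport hfsupp.norm.mul_right.mul_right
  have hmink := lintegral_ofReal_sqrt_re_apply_integral_sq_le hh hcocompact hF hψdom hf hφ hφeq
    hφL2 (by rw [hLHS]; exact ENNReal.ofReal_ne_top)
  rw [hLHS, hRHS, ← ENNReal.ofReal_pow (by positivity),
    ENNReal.ofReal_le_ofReal_iff (by positivity)] at hmink
  exact Real.sqrt_le_iff.mpr ⟨by positivity, hmink⟩

/-- `L²`-boundedness of `R(f)`: if `ψ` dominates right translations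
in the `L²`-norm, then for `f` continuous with compact support and `φ` continuous,
`Γ`-equivariant with finite `L²`-norm, `R(f)φ : x ↦ ∫_G f y • φ (x y) dμ y` is
`Γ`-equivariant and `‖R(f)φ‖ ≤ (∫_G |f g| √(ψ g) dμ g) * ‖φ‖`. -/
theorem convolution_operator_L2_bound
    {G V : Type*} [Group G] [TopologicalSpace G] [IsTopologicalGroup G]
    [LocallyCompactSpace G] [T2Space G] [SecondCountableTopology G]
    [MeasurableSpace G] [BorelSpace G] (μ : Measure G)
    [μ.IsHaarMeasure] [μ.IsMulRightInvariant]
    [NormedAddCommGroup V] [NormedSpace ℂ V] [FiniteDimensional ℂ V] [Nontrivial V]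
    (Γ : Subgroup G) [DiscreteTopology Γ]
    (hcocompact : ∃ C : Set G, IsCompact C ∧ ∀ g : G, ∃ γ ∈ Γ, γ * g ∈ C)
    (χ : Γ →* (V →ₗ[ℂ] V)ˣ)
    (h : G → V → V → ℂ) (hh : IsEquivariantHermitianMetric Γ χ h)
    (F : Set G) (hF : IsFundamentalDomain Γ F μ)
    (ψ : G → ℝ) (hψ : Continuous ψ)
    (hψdom : ∀ (g : G) (φ : G → V), Continuous φ →
      (∀ (γ : Γ) (x : G), φ ((γ : G) * x) = (χ γ : V →ₗ[ℂ] V) (φ x)) →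
      (∫ x in F, (h x (φ (x * g)) (φ (x * g))).re ∂μ) ≤
        ψ g * ∫ x in F, (h x (φ x) (φ x)).re ∂μ)
    (f : G → ℂ) (hf : Continuous f) (hfsupp : HasCompactSupport f)
    (φ : G → V) (hφ : Continuous φ)
    (hφeq : ∀ (γ : Γ) (x : G), φ ((γ : G) * x) = (χ γ : V →ₗ[ℂ] V) (φ x))
    (hφL2 : IntegrableOn (fun x => (h x (φ x) (φ x)).re) F μ) :
    (∀ (γ : Γ) (x : G),
        (∫ y, f y • φ (((γ : G) * x) * y) ∂μ) =
          (χ γ : V →ₗ[ℂ] V) (∫ y, f y • φ (x * y) ∂μ)) ∧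
    Real.sqrt (∫ x in F,
        (h x (∫ y, f y • φ (x * y) ∂μ) (∫ y, f y • φ (x * y) ∂μ)).re ∂μ) ≤
      (∫ g, ‖f g‖ * Real.sqrt (ψ g) ∂μ) *
        Real.sqrt (∫ x in F, (h x (φ x) (φ x)).re ∂μ) :=
  convolution_operator_L2_bound_general μ Γ hcocompact χ h hh F hF ψ hψ hψdom f hf hfsupp φ hφ hφeq
    hφL2
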